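/- Let κ ≥ 2 and let M be the incidence matrix of a finite projective plane of order κ, i.e., the square 0-1 matrix of order κ² + κ + 1 with rows indexed by the lines and columns indexed by the points of the plane, whose (ℓ, p) entry is 1 exactly when the point p lies on the line ℓ. Then M can be written as a sum of κ + 1 permutation matrices of order κ² + κ + 1. -/

import Mathlib

/-!
The line–point incidence graph of a projective plane of order `κ` is a `(κ + 1)`-regular
bipartite graph: each line has `κ + 1` points by definition, and the lines through a point `p`
correspond to the points of any line missing `p`, since each of them meets that line exactly once.
In an `r`-regular bipartite graph with `r > 0` double counting gives Hall's condition, so there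
is a perfect matching; deleting it leaves an `(r - 1)`-regular graph, and induction splits the
graph into `r` perfect matchings, i.e. the incidence matrix into `r` permutation matrices.
-/

/-- A finite geometry (finite linear space): any two distinct points lie on exactly one
common line, and every line contains at least two points. -/
def IsGeometry {P : Type*} (lines : Finset (Finset P)) : Prop :=
  (∀ p q : P, p ≠ q → ∃! ℓ, ℓ ∈ lines ∧ p ∈ ℓ ∧ q ∈ ℓ) ∧
  (∀ ℓ ∈ lines, 2 ≤ ℓ.card)

/-- No three of the four points `a, b, c, d` lie on a common line. -/
def NoThreeCollinear {P : Type*} (lines : Finset (Finset P)) (a b c d : P) : Prop :=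
  ∀ ℓ ∈ lines,
    ¬(a ∈ ℓ ∧ b ∈ ℓ ∧ c ∈ ℓ) ∧ ¬(a ∈ ℓ ∧ b ∈ ℓ ∧ d ∈ ℓ) ∧
    ¬(a ∈ ℓ ∧ c ∈ ℓ ∧ d ∈ ℓ) ∧ ¬(b ∈ ℓ ∧ c ∈ ℓ ∧ d ∈ ℓ)

/-- A finite projective plane of order κ. -/
def IsProjectivePlane {P : Type*} (lines : Finset (Finset P)) (κ : ℕ) : Prop :=
  IsGeometry lines ∧
  (∀ ℓ₁ ∈ lines, ∀ ℓ₂ ∈ lines, ℓ₁ ≠ ℓ₂ → ∃ p, p ∈ ℓ₁ ∧ p ∈ ℓ₂) ∧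
  (∃ a b c d : P, a ≠ b ∧ a ≠ c ∧ a ≠ d ∧ b ≠ c ∧ b ≠ d ∧ c ≠ d ∧
    NoThreeCollinear lines a b c d) ∧
  (∀ ℓ ∈ lines, ℓ.card = κ + 1)

open Finset

section RegularBipartite

variable {A B : Type*} [Fintype A] [DecidableEq B] {r : ℕ} {g : A → Finset B}

theorem card_le_card_biUnion_of_regular (hr : 0 < r) (hA : ∀ a, #(g a) = r)
    (hB : ∀ b, #{a | b ∈ g a} ≤ r) (s : Finset A) : #s ≤ #(s.biUnion g) := by
  have : #s * r ≤ #(s.biUnion g) * r := by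
    refine card_mul_le_card_mul (fun a b ↦ b ∈ g a) (fun a ha ↦ ?_) fun b _ ↦ ?_
    · rw [bipartiteAbove, filter_mem_eq_inter, inter_eq_right.2 (subset_biUnion_of_mem g ha), hA]
    · exact (hB b).trans' (card_le_card (filter_subset_filter _ (subset_univ s)))
  exact Nat.le_of_mul_le_mul_right this hr

theorem card_eq_card_of_regular [Fintype B] (hr : 0 < r) (hA : ∀ a, #(g a) = r)
    (hB : ∀ b, #{a | b ∈ g a} = r) : Fintype.card A = Fintype.card B := by
  have : #(univ : Finset A) * r = #(univ : Finset B) * r :=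
    card_mul_eq_card_mul (fun a b ↦ b ∈ g a) (fun a _ ↦ by simp [bipartiteAbove, hA])
      fun b _ ↦ hB b
  exact Nat.eq_of_mul_eq_mul_right hr this

theorem exists_bijective_mem_of_regular [Fintype B] (hr : 0 < r) (hA : ∀ a, #(g a) = r)
    (hB : ∀ b, #{a | b ∈ g a} = r) : ∃ f : A → B, Function.Bijective f ∧ ∀ a, f a ∈ g a := by
  obtain ⟨f, hf_inj, hf_mem⟩ := (all_card_le_biUnion_card_iff_exists_injective g).1
    (card_le_card_biUnion_of_regular hr hA fun b ↦ (hB b).le)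
  exact ⟨f, (Fintype.bijective_iff_injective_and_card f).2
    ⟨hf_inj, card_eq_card_of_regular hr hA hB⟩, hf_mem⟩

theorem card_filter_mem_erase_of_bijective [DecidableEq A] {f : A → B} (hf : Function.Bijective f)
    (hf_mem : ∀ a, f a ∈ g a) (b : B) :
    #{a | b ∈ (g a).erase (f a)} + 1 = #{a | b ∈ g a} := by
  obtain ⟨a₀, rfl⟩ := hf.2 b
  have : ({a | f a₀ ∈ (g a).erase (f a)} : Finset A) = ({a | f a₀ ∈ g a} : Finset A).erase a₀ := by
    ext a
    simp [hf.1.ne_iff, ne_comm]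
  rw [this, card_erase_add_one (by simpa using hf_mem a₀)]

/-- König: an `r`-regular bipartite graph is the union of `r` edge-disjoint perfect matchings,
the sum of indicators saying that every edge lies in exactly one of them. -/
theorem exists_bijective_decomposition_of_regular [Fintype B] {R : Type*} [AddCommMonoidWithOne R]
    (hA : ∀ a, #(g a) = r) (hB : ∀ b, #{a | b ∈ g a} = r) :
    ∃ f : Fin r → A → B, (∀ t, Function.Bijective (f t)) ∧
      ∀ a b, (∑ t, if b = f t a then (1 : R) else 0) = if b ∈ g a then 1 else 0 := by
  induction r generalizing g with
  | zero =>
    refine ⟨Fin.elim0, fun t ↦ t.elim0, fun a b ↦ ?_⟩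
    simp [card_eq_zero.1 (hA a)]
  | succ r ih =>
    classical
    obtain ⟨f₀, hf₀, hf₀_mem⟩ := exists_bijective_mem_of_regular r.succ_pos hA hB
    obtain ⟨f, hf, hf_sum⟩ := ih (g := fun a ↦ (g a).erase (f₀ a))
      (fun a ↦ by simp [card_erase_of_mem (hf₀_mem a), hA])
      (fun b ↦ by simpa [hB] using card_filter_mem_erase_of_bijective hf₀ hf₀_mem b)
    refine ⟨Fin.cons f₀ f, Fin.cases hf₀ hf, fun a b ↦ ?_⟩
    rw [Fin.sum_univ_succ]
    simp only [Fin.cons_zero, Fin.cons_succ, hf_sum]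
    by_cases hb : b = f₀ a
    · simp [hb, hf₀_mem a]
    · simp [hb]

end RegularBipartite

section ProjectivePlane

variable {P : Type*} {lines : Finset (Finset P)} {κ : ℕ}

theorem IsGeometry.eq_of_mem (h : IsGeometry lines) {p q : P} (hpq : p ≠ q) {ℓ m : Finset P}
    (hℓ : ℓ ∈ lines) (hpℓ : p ∈ ℓ) (hqℓ : q ∈ ℓ) (hm : m ∈ lines) (hpm : p ∈ m) (hqm : q ∈ m) :
    ℓ = m :=
  (h.1 p q hpq).unique ⟨hℓ, hpℓ, hqℓ⟩ ⟨hm, hpm, hqm⟩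

theorem IsProjectivePlane.exists_notMem (h : IsProjectivePlane lines κ) (p : P) :
    ∃ ℓ ∈ lines, p ∉ ℓ := by
  obtain ⟨hgeom, -, ⟨a, b, c, d, hab, hac, -, -, -, hcd, hno⟩, -⟩ := h
  obtain ⟨ab, ⟨hab_mem, ha_ab, hb_ab⟩, -⟩ := hgeom.1 a b hab
  obtain ⟨ac, ⟨hac_mem, ha_ac, hc_ac⟩, -⟩ := hgeom.1 a c hac
  obtain ⟨cd, ⟨hcd_mem, hc_cd, hd_cd⟩, -⟩ := hgeom.1 c d hcd
  by_cases hpa : p = a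
  · subst hpa
    exact ⟨cd, hcd_mem, fun hp ↦ (hno cd hcd_mem).2.2.1 ⟨hp, hc_cd, hd_cd⟩⟩
  by_cases hp_ab : p ∈ ab
  · refine ⟨ac, hac_mem, fun hp_ac ↦ (hno ab hab_mem).1 ⟨ha_ab, hb_ab, ?_⟩⟩
    rwa [hgeom.eq_of_mem hpa hab_mem hp_ab ha_ab hac_mem hp_ac ha_ac]
  · exact ⟨ab, hab_mem, hp_ab⟩

theorem IsProjectivePlane.card_filter_mem [DecidableEq P] (h : IsProjectivePlane lines κ)
    (p : P) : #{ℓ ∈ lines | p ∈ ℓ} = κ + 1 := by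
  obtain ⟨ℓ₀, hℓ₀, hpℓ₀⟩ := h.exists_notMem p
  obtain ⟨hgeom, hmeet, -, hcard⟩ := h
  rw [← hcard ℓ₀ hℓ₀]
  have hmeet₀ : ∀ m ∈ {ℓ ∈ lines | p ∈ ℓ}, ∃ q, q ∈ ℓ₀ ∧ q ∈ m := fun m hm ↦ by
    rw [mem_filter] at hm
    exact hmeet ℓ₀ hℓ₀ m hm.1 (by rintro rfl; exact hpℓ₀ hm.2)
  choose q hqℓ₀ hqm using hmeet₀
  have hpq {q} (hq : q ∈ ℓ₀) : p ≠ q := by rintro rfl; exact hpℓ₀ hq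
  refine card_bij q hqℓ₀ (fun m₁ hm₁ m₂ hm₂ hq ↦ ?_) fun x hx ↦ ?_
  · rw [mem_filter] at hm₁ hm₂
    exact hgeom.eq_of_mem (hpq (hqℓ₀ m₁ _)) hm₁.1 hm₁.2 (hqm m₁ _) hm₂.1 hm₂.2
      (hq ▸ hqm m₂ _)
  · obtain ⟨m, ⟨hm, hpm, hxm⟩, -⟩ := hgeom.1 p x (hpq hx)
    have hm' : m ∈ {ℓ ∈ lines | p ∈ ℓ} := mem_filter.2 ⟨hm, hpm⟩
    refine ⟨m, hm', by_contra fun hne ↦ hpℓ₀ ?_⟩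
    rwa [hgeom.eq_of_mem hne hℓ₀ (hqℓ₀ m hm') hx hm (hqm m hm') hxm]

end ProjectivePlane

theorem incidence_matrix_sum_of_permutation_matrices {κ : ℕ}
    {P : Type*} [Fintype P] [DecidableEq P]
    (lines : Finset (Finset P)) (hplane : IsProjectivePlane lines κ)
    (M : Matrix {ℓ // ℓ ∈ lines} P ℕ)
    (hM : ∀ (ℓ : {ℓ // ℓ ∈ lines}) (p : P), M ℓ p = if p ∈ ℓ.1 then 1 else 0) :
    ∃ f : Fin (κ + 1) → ({ℓ // ℓ ∈ lines} → P),
      (∀ t, Function.Bijective (f t)) ∧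
      ∀ (ℓ : {ℓ // ℓ ∈ lines}) (p : P),
        M ℓ p = ∑ t : Fin (κ + 1), if p = f t ℓ then 1 else 0 := by
  have hpoint (p : P) : #{ℓ : {ℓ // ℓ ∈ lines} | p ∈ ℓ.1} = κ + 1 := by
    rw [univ_eq_attach, filter_attach (p ∈ ·), card_map, card_attach]
    exact hplane.card_filter_mem p
  obtain ⟨f, hf, hsum⟩ := exists_bijective_decomposition_of_regular (R := ℕ)
    (fun ℓ : {ℓ // ℓ ∈ lines} ↦ hplane.2.2.2 ℓ.1 ℓ.2) hpoint
  exact ⟨f, hf, fun ℓ p ↦ by rw [hM, hsum]⟩
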